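/- Let k ≥ 2, u ∈ R^k, and let v_1, v_2 ∈ R^k be unit vectors with 0 ≤ v_1 · v_2 ≤ cos θ for some θ ∈ (0, π/2]. Then ||P_{v_1^⊥}(u)||_2^2 + ||P_{v_2^⊥}(u)||_2^2 ≥ (1 − cos θ) ||u||_2^2, where P_{v^⊥}(u) = u − (u·v)v. -/

import Mathlib

open Real

/-- Orthogonal projection of `u` onto the hyperplane orthogonal to the unit vector `v`:
`P_{v^⊥}(u) = u − (u·v) v`. -/
noncomputable def projPerp {E : Type*} [NormedAddCommGroup E] [InnerProductSpace ℝ E]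
    (v u : E) : E := u - (inner ℝ u v : ℝ) • v

/-!
Since `‖P_{v^⊥} u‖² = ‖u‖² − ⟪u, v⟫²`, the claim says `⟪u, v₁⟫² + ⟪u, v₂⟫² ≤ (1 + cos θ) ‖u‖²`.
With `a = ⟪u, v₁⟫`, `b = ⟪u, v₂⟫` and `w = a v₁ + b v₂` one has `⟪u, w⟫ = a² + b²`, while
`‖w‖² = a² + b² + 2ab⟪v₁, v₂⟫ ≤ (1 + |⟪v₁, v₂⟫|)(a² + b²)`; Cauchy–Schwarz for `⟪u, w⟫` then
gives `(a² + b²)² ≤ ‖u‖² (1 + |⟪v₁, v₂⟫|)(a² + b²)`.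
-/

section

variable {E : Type*} [NormedAddCommGroup E] [InnerProductSpace ℝ E]

lemma norm_projPerp_sq {v : E} (hv : ‖v‖ = 1) (u : E) :
    ‖projPerp v u‖ ^ 2 = ‖u‖ ^ 2 - inner ℝ u v ^ 2 := by
  rw [projPerp, norm_sub_sq_real, real_inner_smul_right, norm_smul, hv, norm_eq_abs, mul_one,
    sq_abs]
  ring

lemma norm_smul_add_smul_sq_le {v₁ v₂ : E} (hv₁ : ‖v₁‖ = 1) (hv₂ : ‖v₂‖ = 1) (a b : ℝ) :
    ‖a • v₁ + b • v₂‖ ^ 2 ≤ (1 + |inner ℝ v₁ v₂|) * (a ^ 2 + b ^ 2) := by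
  have hexpand : ‖a • v₁ + b • v₂‖ ^ 2 = a ^ 2 + b ^ 2 + 2 * (a * b) * inner ℝ v₁ v₂ := by
    rw [norm_add_sq_real, norm_smul, norm_smul, real_inner_smul_left, real_inner_smul_right,
      hv₁, hv₂, norm_eq_abs, norm_eq_abs, mul_one, mul_one, sq_abs, sq_abs]
    ring
  have hcross : 2 * (a * b) * inner ℝ v₁ v₂ ≤ |inner ℝ v₁ v₂| * (a ^ 2 + b ^ 2) :=
    calc 2 * (a * b) * inner ℝ v₁ v₂ ≤ |2 * (a * b) * inner ℝ v₁ v₂| := le_abs_self _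
      _ = |inner ℝ v₁ v₂| * (2 * |a * b|) := by rw [abs_mul, abs_mul, abs_two]; ring
      _ ≤ |inner ℝ v₁ v₂| * (a ^ 2 + b ^ 2) := by
        gcongr
        have h := two_mul_le_add_sq |a| |b|
        rwa [sq_abs, sq_abs, mul_assoc, ← abs_mul] at h
  rw [hexpand]
  linarith

lemma inner_sq_add_inner_sq_le {v₁ v₂ : E} (hv₁ : ‖v₁‖ = 1) (hv₂ : ‖v₂‖ = 1) (u : E) :
    inner ℝ u v₁ ^ 2 + inner ℝ u v₂ ^ 2 ≤ (1 + |inner ℝ v₁ v₂|) * ‖u‖ ^ 2 := by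
  set a : ℝ := inner ℝ u v₁
  set b : ℝ := inner ℝ u v₂
  set s := a ^ 2 + b ^ 2
  have hs : 0 ≤ s := by positivity
  have hinner : inner ℝ u (a • v₁ + b • v₂) = s := by
    rw [inner_add_right, real_inner_smul_right, real_inner_smul_right]
    ring
  have hcs : s ^ 2 ≤ ‖u‖ ^ 2 * ((1 + |inner ℝ v₁ v₂|) * s) :=
    calc s ^ 2 = inner ℝ u (a • v₁ + b • v₂) ^ 2 := by rw [hinner]
      _ ≤ ‖u‖ ^ 2 * ‖a • v₁ + b • v₂‖ ^ 2 := by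
        rw [← mul_pow]; exact pow_le_pow_left₀ (hinner ▸ hs) (real_inner_le_norm _ _) 2
      _ ≤ ‖u‖ ^ 2 * ((1 + |inner ℝ v₁ v₂|) * s) := by
        gcongr; exact norm_smul_add_smul_sq_le hv₁ hv₂ a b
  rcases hs.eq_or_lt with hs0 | hspos
  · rw [← hs0]; positivity
  · nlinarith

end

theorem projPerp_sq_add_projPerp_sq_ge_general (k : ℕ) (θ : ℝ)
    (u v₁ v₂ : EuclideanSpace ℝ (Fin k))
    (hv₁ : ‖v₁‖ = 1) (hv₂ : ‖v₂‖ = 1)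
    (h0 : 0 ≤ (inner ℝ v₁ v₂ : ℝ)) (h1 : (inner ℝ v₁ v₂ : ℝ) ≤ Real.cos θ) :
    (1 - Real.cos θ) * ‖u‖ ^ 2 ≤ ‖projPerp v₁ u‖ ^ 2 + ‖projPerp v₂ u‖ ^ 2 := by
  have hkey := inner_sq_add_inner_sq_le hv₁ hv₂ u
  rw [abs_of_nonneg h0] at hkey
  rw [norm_projPerp_sq hv₁, norm_projPerp_sq hv₂]
  nlinarith [sq_nonneg ‖u‖]

/-- For `k ≥ 2`, `u ∈ ℝ^k`, and unit vectors `v₁, v₂` with `0 ≤ v₁·v₂ ≤ cos θ`,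
`θ ∈ (0, π/2]`, one has `‖P_{v₁^⊥}(u)‖² + ‖P_{v₂^⊥}(u)‖² ≥ (1 − cos θ) ‖u‖²`. -/
theorem projPerp_sq_add_projPerp_sq_ge (k : ℕ) (hk : 2 ≤ k) (θ : ℝ) (hθ0 : 0 < θ)
    (hθ1 : θ ≤ Real.pi / 2) (u v₁ v₂ : EuclideanSpace ℝ (Fin k))
    (hv₁ : ‖v₁‖ = 1) (hv₂ : ‖v₂‖ = 1)
    (h0 : 0 ≤ (inner ℝ v₁ v₂ : ℝ)) (h1 : (inner ℝ v₁ v₂ : ℝ) ≤ Real.cos θ) :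
    (1 - Real.cos θ) * ‖u‖ ^ 2 ≤ ‖projPerp v₁ u‖ ^ 2 + ‖projPerp v₂ u‖ ^ 2 :=
  projPerp_sq_add_projPerp_sq_ge_general k θ u v₁ v₂ hv₁ hv₂ h0 h1
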